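/- Suppose P ∈ 𝒫₂(ℝ^d) and the law of ε and the reference law P^U are absolutely continuous with finite second moments, Y = b*X + ε with X independent of ε, E X X^⊤ = Σ positive definite, and P^X is not a point mass. If φ is the optimal transport map from P^U to P^ε, then the coupling of (U, Y − bX) induced by transporting U to ε via φ and independently adding (b* − b)X has squared transport cost W₂²(P^U, P^ε) + E‖(b* − b)X‖², and consequently ℒ(b; U) − ℒ(b*; U) ≥ 0 for all b ∈ ℝ^{d×p}, where ℒ(b; U) := ⟨⟨P^{Y−bX}, P^U⟩⟩. -/

import Mathlib

/-!
Let `ν` be the law of `(b* − b)X`: it is centred with finite second moment, and by independence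
the law of `Y − bX = ε + (b* − b)X` is `P^ε ∗ ν`. Adding an independent centred vector to one
side of a coupling does not change its cross term `∫ ⟪x, y⟫`, so every coupling of
`(P^ε, P^U)` lifts to a coupling of `(P^ε ∗ ν, P^U)` with the same value, whence
`⟨⟨P^ε, P^U⟩⟩ ≤ ⟨⟨P^{Y−bX}, P^U⟩⟩`. The same vanishing cross term splits the cost of the
coupling `(u, φ u + z)` into the cost of `φ` plus `E‖(b* − b)X‖²`.
-/

open MeasureTheory ProbabilityTheory

noncomputable section

/-- `γ` is a coupling of `P` and `Q`. -/
def IsCoupling {α β : Type*} [MeasurableSpace α] [MeasurableSpace β]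
    (γ : Measure (α × β)) (P : Measure α) (Q : Measure β) : Prop :=
  γ.map Prod.fst = P ∧ γ.map Prod.snd = Q

/-- The Wasserstein product `⟨⟨P,Q⟩⟩`. -/
def wip {d : ℕ} (P Q : Measure (EuclideanSpace ℝ (Fin d))) : ℝ :=
  sSup {r | ∃ γ : Measure (EuclideanSpace ℝ (Fin d) × EuclideanSpace ℝ (Fin d)),
    IsCoupling γ P Q ∧ r = ∫ z, (inner ℝ z.1 z.2 : ℝ) ∂γ}

/-- The squared 2-Wasserstein distance. -/
def W2sq {d : ℕ} (P Q : Measure (EuclideanSpace ℝ (Fin d))) : ℝ :=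
  sInf {r | ∃ γ : Measure (EuclideanSpace ℝ (Fin d) × EuclideanSpace ℝ (Fin d)),
    IsCoupling γ P Q ∧ r = ∫ z, ‖z.1 - z.2‖ ^ 2 ∂γ}

open scoped InnerProductSpace

section Couplings

variable {α β : Type*} [MeasurableSpace α] [MeasurableSpace β]
  {P : Measure α} {Q : Measure β} {γ : Measure (α × β)}

lemma IsCoupling.isProbabilityMeasure [IsProbabilityMeasure P] (h : IsCoupling γ P Q) :
    IsProbabilityMeasure γ := by
  rw [← Measure.isProbabilityMeasure_map_iff measurable_fst.aemeasurable, h.1]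
  infer_instance

lemma isCoupling_prod [IsProbabilityMeasure P] [IsProbabilityMeasure Q] :
    IsCoupling (P.prod Q) P Q := by
  constructor <;> simp

variable {F : Type*} [NormedAddCommGroup F] {p : ENNReal}

lemma IsCoupling.memLp_fst {f : α → F} (h : IsCoupling γ P Q) (hf : MemLp f p P) :
    MemLp (fun z => f z.1) p γ := by
  rw [← h.1] at hf
  exact (memLp_map_measure_iff hf.1 measurable_fst.aemeasurable).mp hf

lemma IsCoupling.memLp_snd {f : β → F} (h : IsCoupling γ P Q) (hf : MemLp f p Q) :
    MemLp (fun z => f z.2) p γ := by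
  rw [← h.2] at hf
  exact (memLp_map_measure_iff hf.1 measurable_snd.aemeasurable).mp hf

lemma IsCoupling.integral_fst {f : α → ℝ} (h : IsCoupling γ P Q)
    (hf : AEStronglyMeasurable f P) : ∫ z, f z.1 ∂γ = ∫ x, f x ∂P := by
  rw [← h.1] at hf ⊢
  exact (integral_map measurable_fst.aemeasurable hf).symm

lemma IsCoupling.integral_snd {f : β → ℝ} (h : IsCoupling γ P Q)
    (hf : AEStronglyMeasurable f Q) : ∫ z, f z.2 ∂γ = ∫ y, f y ∂Q := by
  rw [← h.2] at hf ⊢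
  exact (integral_map measurable_snd.aemeasurable hf).symm

end Couplings

section InnerProduct

variable {α : Type*} [MeasurableSpace α] {μ : Measure α}
  {E : Type*} [NormedAddCommGroup E] [InnerProductSpace ℝ E]

lemma MeasureTheory.MemLp.integrable_inner {f g : α → E} (hf : MemLp f 2 μ) (hg : MemLp g 2 μ) :
    Integrable (fun x => ⟪f x, g x⟫_ℝ) μ := by
  refine (L2.integrable_inner (𝕜 := ℝ) (hf.toLp f) (hg.toLp g)).congr ?_
  filter_upwards [hf.coeFn_toLp, hg.coeFn_toLp] with x hfx hgx
  rw [hfx, hgx]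

variable [CompleteSpace E] [MeasurableSpace E] {ν : Measure E}

lemma integral_inner_prod_eq_zero_of_integral_eq_zero [IsFiniteMeasure μ]
    [IsProbabilityMeasure ν] {f : α → E} (hf : MemLp f 2 μ) (hν : MemLp id 2 ν)
    (hmean : ∫ w, w ∂ν = 0) : ∫ z, ⟪f z.1, z.2⟫_ℝ ∂(μ.prod ν) = 0 := by
  rw [integral_prod (fun z => ⟪f z.1, z.2⟫_ℝ) ((hf.comp_fst ν).integrable_inner (hν.comp_snd μ))]
  have hcentered (u : E) : ∫ w, ⟪u, w⟫_ℝ ∂ν = 0 := by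
    rw [integral_inner (f := fun w => w) (hν.integrable one_le_two), hmean, inner_zero_right]
  simp only [hcentered, integral_zero]

end InnerProduct

section Transport

variable {E : Type*} [NormedAddCommGroup E] [MeasurableSpace E] [BorelSpace E]
  [SecondCountableTopology E] {P Q ν : Measure E} {γ : Measure (E × E)}

lemma memLp_id_conv {p : ENNReal} [IsFiniteMeasure P] [IsFiniteMeasure ν]
    (hP : MemLp id p P) (hν : MemLp id p ν) : MemLp id p (P ∗ ν) :=
  (memLp_map_measure_iff aestronglyMeasurable_id measurable_add.aemeasurable).mpr
    ((hP.comp_fst ν).add (hν.comp_snd P))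

lemma IsCoupling.conv_left [IsProbabilityMeasure P] (h : IsCoupling γ P Q) (ν : Measure E)
    [IsProbabilityMeasure ν] :
    IsCoupling ((γ.prod ν).map fun zw => (zw.1.1 + zw.2, zw.1.2)) (P ∗ ν) Q := by
  have := h.isProbabilityMeasure
  constructor
  · rw [Measure.map_map measurable_fst (by fun_prop)]
    change (γ.prod ν).map ((fun x : E × E => x.1 + x.2) ∘ Prod.map Prod.fst id) = _
    rw [← Measure.map_map measurable_add (measurable_fst.prodMap measurable_id),
      ← Measure.map_prod_map _ _ measurable_fst measurable_id, h.1, Measure.map_id]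
    rfl
  · rw [Measure.map_map measurable_snd (by fun_prop)]
    change (γ.prod ν).map (Prod.snd ∘ Prod.fst) = _
    rw [← Measure.map_map measurable_snd measurable_fst, Measure.map_fst_prod, measure_univ,
      one_smul, h.2]

variable [InnerProductSpace ℝ E]

lemma IsCoupling.integral_inner_le (h : IsCoupling γ P Q) (hP : MemLp id 2 P)
    (hQ : MemLp id 2 Q) :
    ∫ z, ⟪z.1, z.2⟫_ℝ ∂γ ≤ (∫ x, ‖x‖ ^ 2 ∂P + ∫ y, ‖y‖ ^ 2 ∂Q) / 2 := by
  have h1 : MemLp (fun z : E × E => z.1) 2 γ := h.memLp_fst hP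
  have h2 : MemLp (fun z : E × E => z.2) 2 γ := h.memLp_snd hQ
  have hsq1 : Integrable (fun z : E × E => ‖z.1‖ ^ 2) γ := h1.integrable_norm_pow two_ne_zero
  have hsq2 : Integrable (fun z : E × E => ‖z.2‖ ^ 2) γ := h2.integrable_norm_pow two_ne_zero
  calc ∫ z, ⟪z.1, z.2⟫_ℝ ∂γ ≤ ∫ z, (‖z.1‖ ^ 2 + ‖z.2‖ ^ 2) / 2 ∂γ := by
        refine integral_mono (h1.integrable_inner h2) ((hsq1.add hsq2).div_const 2) fun z => ?_
        nlinarith [real_inner_le_norm z.1 z.2, sq_nonneg (‖z.1‖ - ‖z.2‖)]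
    _ = (∫ x, ‖x‖ ^ 2 ∂P + ∫ y, ‖y‖ ^ 2 ∂Q) / 2 := by
        rw [integral_div, integral_add hsq1 hsq2, h.integral_fst (f := fun x => ‖x‖ ^ 2)
          (by fun_prop), h.integral_snd (f := fun y => ‖y‖ ^ 2) (by fun_prop)]

variable [CompleteSpace E] [IsProbabilityMeasure P] [IsProbabilityMeasure ν]

lemma IsCoupling.integral_inner_conv_left (h : IsCoupling γ P Q) (hP : MemLp id 2 P)
    (hQ : MemLp id 2 Q) (hν : MemLp id 2 ν) (hmean : ∫ w, w ∂ν = 0) :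
    ∫ q, ⟪q.1, q.2⟫_ℝ ∂((γ.prod ν).map fun zw => (zw.1.1 + zw.2, zw.1.2))
      = ∫ z, ⟪z.1, z.2⟫_ℝ ∂γ := by
  have := h.isProbabilityMeasure
  have h1 : MemLp (fun zw : (E × E) × E => zw.1.1) 2 (γ.prod ν) := (h.memLp_fst hP).comp_fst ν
  have h2 : MemLp (fun z : E × E => z.2) 2 γ := h.memLp_snd hQ
  have h3 : MemLp (fun zw : (E × E) × E => zw.2) 2 (γ.prod ν) := hν.comp_snd γ
  have hcross : ∫ zw : (E × E) × E, ⟪zw.2, zw.1.2⟫_ℝ ∂(γ.prod ν) = 0 := by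
    simpa only [real_inner_comm] using integral_inner_prod_eq_zero_of_integral_eq_zero h2 hν hmean
  rw [integral_map (by fun_prop) (by fun_prop)]
  simp only [inner_add_left]
  rw [integral_add (h1.integrable_inner (h2.comp_fst ν)) (h3.integrable_inner (h2.comp_fst ν)),
    hcross, add_zero, integral_fun_fst (fun z : E × E => ⟪z.1, z.2⟫_ℝ)]
  simp

theorem integral_norm_sub_sq_map_prod_add {φ : E → E} (hφP : MemLp (fun u => φ u - u) 2 P)
    (hν : MemLp id 2 ν) (hmean : ∫ w, w ∂ν = 0) (hφ : Measurable φ) :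
    ∫ q, ‖q.1 - q.2‖ ^ 2 ∂((P.prod ν).map fun z => (z.1, φ z.1 + z.2))
      = ∫ u, ‖φ u - u‖ ^ 2 ∂P + ∫ w, ‖w‖ ^ 2 ∂ν := by
  have hA : MemLp (fun z : E × E => φ z.1 - z.1) 2 (P.prod ν) := hφP.comp_fst ν
  have hB : MemLp (fun z : E × E => z.2) 2 (P.prod ν) := hν.comp_snd P
  have hexpand (z : E × E) : ‖z.1 - (φ z.1 + z.2)‖ ^ 2
      = ‖φ z.1 - z.1‖ ^ 2 + 2 * ⟪φ z.1 - z.1, z.2⟫_ℝ + ‖z.2‖ ^ 2 := by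
    rw [← norm_neg, show -(z.1 - (φ z.1 + z.2)) = (φ z.1 - z.1) + z.2 by abel, norm_add_sq_real]
  have hsq : Integrable (fun z : E × E => ‖φ z.1 - z.1‖ ^ 2) (P.prod ν) :=
    hA.integrable_norm_pow'
  have hcross : Integrable (fun z : E × E => 2 * ⟪φ z.1 - z.1, z.2⟫_ℝ) (P.prod ν) :=
    (hA.integrable_inner hB).const_mul 2
  have hsq2 : Integrable (fun z : E × E => ‖z.2‖ ^ 2) (P.prod ν) := hB.integrable_norm_pow'
  have hsq_cross : Integrable
      (fun z : E × E => ‖φ z.1 - z.1‖ ^ 2 + 2 * ⟪φ z.1 - z.1, z.2⟫_ℝ) (P.prod ν) :=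
    hsq.add hcross
  rw [integral_map (by fun_prop) (by fun_prop)]
  simp only [hexpand]
  rw [integral_add hsq_cross hsq2, integral_add hsq hcross,
    integral_const_mul, integral_inner_prod_eq_zero_of_integral_eq_zero hφP hν hmean,
    integral_fun_fst (fun u => ‖φ u - u‖ ^ 2), integral_fun_snd (fun w => ‖w‖ ^ 2)]
  simp

end Transport

theorem wip_le_wip_conv {d : ℕ} {P Q ν : Measure (EuclideanSpace ℝ (Fin d))}
    [IsProbabilityMeasure P] [IsProbabilityMeasure Q] [IsProbabilityMeasure ν]
    (hP : MemLp id 2 P) (hQ : MemLp id 2 Q) (hν : MemLp id 2 ν) (hmean : ∫ w, w ∂ν = 0) :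
    wip P Q ≤ wip (P ∗ ν) Q := by
  refine csSup_le_csSup ⟨(∫ x, ‖x‖ ^ 2 ∂(P ∗ ν) + ∫ y, ‖y‖ ^ 2 ∂Q) / 2, ?_⟩
    ⟨_, P.prod Q, isCoupling_prod, rfl⟩ ?_
  · rintro r ⟨γ, hγ, rfl⟩
    exact hγ.integral_inner_le (memLp_id_conv hP hν) hQ
  · rintro r ⟨γ, hγ, rfl⟩
    exact ⟨_, hγ.conv_left ν, (hγ.integral_inner_conv_left hP hQ hν hmean).symm⟩

theorem stmt_15_general {d p : ℕ} {Ω : Type*} [MeasurableSpace Ω] (μ : Measure Ω)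
    [IsProbabilityMeasure μ]
    (X : Ω → EuclideanSpace ℝ (Fin p)) (ε : Ω → EuclideanSpace ℝ (Fin d))
    (hXm : Measurable X) (hεm : Measurable ε) (hindep : IndepFun X ε μ)
    (hX0 : ∫ ω, X ω ∂μ = 0)
    (hX2 : Integrable (fun ω => ‖X ω‖ ^ 2) μ) (hε2 : Integrable (fun ω => ‖ε ω‖ ^ 2) μ)
    (PU : Measure (EuclideanSpace ℝ (Fin d))) [IsProbabilityMeasure PU]
    (hU2 : Integrable (fun y => ‖y‖ ^ 2) PU)
    (bstar b : EuclideanSpace ℝ (Fin p) →L[ℝ] EuclideanSpace ℝ (Fin d))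
    (φ : EuclideanSpace ℝ (Fin d) → EuclideanSpace ℝ (Fin d)) (hφm : Measurable φ)
    (hφpush : PU.map φ = μ.map ε)
    (hφopt : ∫ u, ‖φ u - u‖ ^ 2 ∂PU = W2sq PU (μ.map ε)) :
    (∫ q, ‖q.1 - q.2‖ ^ 2
        ∂((PU.prod (μ.map fun ω => (bstar - b) (X ω))).map fun z => (z.1, φ z.1 + z.2))
      = W2sq PU (μ.map ε) + ∫ ω, ‖(bstar - b) (X ω)‖ ^ 2 ∂μ) ∧
    0 ≤ wip (μ.map fun ω => (bstar (X ω) + ε ω) - b (X ω)) PU - wip (μ.map ε) PU := by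
  set L := bstar - b
  have hLX : Measurable fun ω => L (X ω) := L.continuous.measurable.comp hXm
  set ν := μ.map fun ω => L (X ω)
  have : IsProbabilityMeasure ν := Measure.isProbabilityMeasure_map hLX.aemeasurable
  have : IsProbabilityMeasure (μ.map ε) := Measure.isProbabilityMeasure_map hεm.aemeasurable
  have hX : MemLp X 2 μ := (memLp_two_iff_integrable_sq_norm hXm.aestronglyMeasurable).mpr hX2
  have hν : MemLp id 2 ν := (memLp_map_measure_iff aestronglyMeasurable_id
    hLX.aemeasurable).mpr (hX.continuousLinearMap_comp L)
  have hν_mean : ∫ w, w ∂ν = 0 := by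
    rw [integral_map (f := fun w => w) hLX.aemeasurable aestronglyMeasurable_id,
      L.integral_comp_comm (hX.integrable one_le_two), hX0, map_zero]
  have hε : MemLp id 2 (μ.map ε) := (memLp_map_measure_iff aestronglyMeasurable_id
    hεm.aemeasurable).mpr ((memLp_two_iff_integrable_sq_norm hεm.aestronglyMeasurable).mpr hε2)
  have hU : MemLp id 2 PU := (memLp_two_iff_integrable_sq_norm aestronglyMeasurable_id).mpr hU2
  have hφU : MemLp (fun u => φ u - u) 2 PU := by
    rw [← hφpush] at hε
    exact ((memLp_map_measure_iff hε.1 hφm.aemeasurable).mp hε).sub hU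
  constructor
  · rw [integral_norm_sub_sq_map_prod_add hφU hν hν_mean hφm, hφopt,
      integral_map hLX.aemeasurable (by fun_prop)]
  · have hY : μ.map (fun ω => bstar (X ω) + ε ω - b (X ω)) = μ.map ε ∗ ν := by
      have hsum : (fun ω => bstar (X ω) + ε ω - b (X ω)) = ε + fun ω => L (X ω) := by
        ext1 ω
        simp only [L, sub_apply, Pi.add_apply]
        abel
      rw [hsum, (hindep.symm.comp measurable_id L.continuous.measurable).map_add_eq_map_conv_map
        hεm hLX]
    rw [hY, sub_nonneg]
    exact wip_le_wip_conv hε hU hν hν_mean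

/-- In the linear model `Y = b*X + ε`, transporting `U` to `ε` via the optimal map `φ`
and independently adding `(b* − b)X` yields a coupling of `(U, Y − bX)` with squared
cost `W₂²(P^U, P^ε) + E‖(b* − b)X‖²`; consequently `ℒ(b;U) − ℒ(b*;U) ≥ 0`, where
`ℒ(b;U) = ⟨⟨P^{Y−bX}, P^U⟩⟩`. -/
theorem stmt_15 {d p : ℕ} {Ω : Type*} [MeasurableSpace Ω] (μ : Measure Ω)
    [IsProbabilityMeasure μ]
    (X : Ω → EuclideanSpace ℝ (Fin p)) (ε : Ω → EuclideanSpace ℝ (Fin d))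
    (hXm : Measurable X) (hεm : Measurable ε) (hindep : IndepFun X ε μ)
    (hX0 : ∫ ω, X ω ∂μ = 0)
    (hX2 : Integrable (fun ω => ‖X ω‖ ^ 2) μ) (hε2 : Integrable (fun ω => ‖ε ω‖ ^ 2) μ)
    (hεac : μ.map ε ≪ volume)
    (Sig : Matrix (Fin p) (Fin p) ℝ) (hSigPD : Sig.PosDef)
    (hSigEq : ∀ i j, Sig i j = ∫ ω, X ω i * X ω j ∂μ)
    (hnotpm : ∀ c, μ.map X ≠ Measure.dirac c)
    (PU : Measure (EuclideanSpace ℝ (Fin d))) [IsProbabilityMeasure PU]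
    (hUac : PU ≪ volume) (hU2 : Integrable (fun y => ‖y‖ ^ 2) PU)
    (bstar b : EuclideanSpace ℝ (Fin p) →L[ℝ] EuclideanSpace ℝ (Fin d))
    (φ : EuclideanSpace ℝ (Fin d) → EuclideanSpace ℝ (Fin d)) (hφm : Measurable φ)
    (hφpush : PU.map φ = μ.map ε)
    (hφopt : ∫ u, ‖φ u - u‖ ^ 2 ∂PU = W2sq PU (μ.map ε)) :
    (∫ q, ‖q.1 - q.2‖ ^ 2
        ∂((PU.prod (μ.map fun ω => (bstar - b) (X ω))).map fun z => (z.1, φ z.1 + z.2))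
      = W2sq PU (μ.map ε) + ∫ ω, ‖(bstar - b) (X ω)‖ ^ 2 ∂μ) ∧
    0 ≤ wip (μ.map fun ω => (bstar (X ω) + ε ω) - b (X ω)) PU - wip (μ.map ε) PU :=
  stmt_15_general μ X ε hXm hεm hindep hX0 hX2 hε2 PU hU2 bstar b φ hφm hφpush hφopt
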